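/- arXiv:2108.04482 — 11 statements merged into one kernel-verified Lean document; each statement's English description precedes it below -/
import Mathlib

section
/- The Huber function lower bound for the Moreau envelope under sharp minima: if F is convex, lower semicontinuous, proper on R^n with nonempty optimal set X* and optimal value F*, and satisfies F(x) - F* ≥ σ · dist_{X*}(x) for all x (weak sharp minima, σ > 0), then for all x and μ > 0, F_μ(x) - F* ≥ H_{σ²μ}(σ · dist_{X*}(x)), where F_μ(x) = min_z F(z) + (1/(2μ))‖z - x‖² is the Moreau envelope and H_τ(s) = s - τ/2 if s > τ, and H_τ(s) = s²/(2τ) if s ≤ τ is the Huber function. -/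
open Metric Set

noncomputable def huber (τ s : ℝ) : ℝ := if τ < s then s - τ / 2 else s ^ 2 / (2 * τ)

lemma huber_key {σ μ d t r : ℝ} (hσ : 0 < σ) (hμ : 0 < μ) (hd : 0 ≤ d) (ht : 0 ≤ t)
    (hr : 0 ≤ r) (htri : d ≤ t + r) :
    huber (σ ^ 2 * μ) (σ * d) ≤ σ * t + r ^ 2 / (2 * μ) := by
  have h2μ : 0 < 2 * μ := by linarith
  unfold huber
  rcases le_or_gt d t with hdt | hdt
  · -- t ≥ d: σ t ≥ σ d ≥ huber
    have hpos : 0 ≤ r ^ 2 / (2 * μ) := by positivity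
    split_ifs with h
    · nlinarith
    · push_neg at h
      have hsimp : (σ * d) ^ 2 / (2 * (σ ^ 2 * μ)) = d ^ 2 / (2 * μ) := by
        field_simp
      rw [hsimp]
      have : d ^ 2 / (2 * μ) ≤ σ * d := by
        rw [div_le_iff₀ h2μ]; nlinarith
      nlinarith
  · -- t < d: r ≥ d - t > 0
    have hrdt : d - t ≤ r := by linarith
    have hr2 : (d - t) ^ 2 ≤ r ^ 2 := by nlinarith
    split_ifs with h
    · -- σ²μ < σd
      have hμd : σ * μ < d := by nlinarith
      have key : σ * d - σ ^ 2 * μ / 2 ≤ σ * t + (d - t) ^ 2 / (2 * μ) := by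
        rw [← sub_nonneg]
        have : σ * t + (d - t) ^ 2 / (2 * μ) - (σ * d - σ ^ 2 * μ / 2)
            = ((d - t) - σ * μ) ^ 2 / (2 * μ) := by field_simp; ring
        rw [this]; positivity
      have : (d - t) ^ 2 / (2 * μ) ≤ r ^ 2 / (2 * μ) := by
        apply div_le_div_of_nonneg_right hr2 h2μ.le
      linarith
    · push_neg at h
      have hdμ : d ≤ σ * μ := by nlinarith
      have hsimp : (σ * d) ^ 2 / (2 * (σ ^ 2 * μ)) = d ^ 2 / (2 * μ) := by
        field_simp
      rw [hsimp]
      have key : d ^ 2 / (2 * μ) ≤ σ * t + (d - t) ^ 2 / (2 * μ) := by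
        rw [← sub_nonneg]
        have : σ * t + (d - t) ^ 2 / (2 * μ) - d ^ 2 / (2 * μ)
            = t * (2 * σ * μ + t - 2 * d) / (2 * μ) := by field_simp; ring
        rw [this]
        apply div_nonneg _ (le_of_lt h2μ)
        nlinarith
      have : (d - t) ^ 2 / (2 * μ) ≤ r ^ 2 / (2 * μ) := by
        apply div_le_div_of_nonneg_right hr2 h2μ.le
      linarith

theorem stmt_0 {n : ℕ} (F : EuclideanSpace ℝ (Fin n) → ℝ)
    (hconv : ConvexOn ℝ Set.univ F) (hlsc : LowerSemicontinuous F)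
    (Xs : Set (EuclideanSpace ℝ (Fin n))) (hXs : Xs = {y | ∀ z, F y ≤ F z})
    (hne : Xs.Nonempty) (Fstar : ℝ) (hFstar : ∀ y ∈ Xs, F y = Fstar)
    (σ : ℝ) (hσ : 0 < σ)
    (hgrowth : ∀ x, σ * infDist x Xs ≤ F x - Fstar)
    (μ : ℝ) (hμ : 0 < μ) (x p : EuclideanSpace ℝ (Fin n))
    (hp : ∀ z, F p + ‖p - x‖ ^ 2 / (2 * μ) ≤ F z + ‖z - x‖ ^ 2 / (2 * μ)) :
    huber (σ ^ 2 * μ) (σ * infDist x Xs) ≤ (F p + ‖p - x‖ ^ 2 / (2 * μ)) - Fstar := by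
  set d := infDist x Xs with hdd
  set t := infDist p Xs with htt
  have hd : 0 ≤ d := infDist_nonneg
  have ht : 0 ≤ t := infDist_nonneg
  have hr : 0 ≤ ‖p - x‖ := norm_nonneg _
  have htri : d ≤ t + ‖p - x‖ := by
    have := infDist_le_infDist_add_dist (x := x) (y := p) (s := Xs)
    rw [dist_eq_norm, norm_sub_rev] at this
    linarith
  have hFp : σ * t ≤ F p - Fstar := hgrowth p
  have := huber_key (t := t) (r := ‖p - x‖) hσ hμ hd ht hr htri
  linarith
end

section
/- Quadratic growth is inherited by the Moreau envelope with degraded modulus: if F is convex, lower semicontinuous, proper with nonempty optimal set X* and satisfies F(x) - F* ≥ σ · dist_{X*}(x)² for all x (σ > 0), then for all x and μ > 0, F_μ(x) - F* ≥ (σ/(1 + 2σμ)) · dist_{X*}(x)², where F_μ is the Moreau envelope of F with parameter μ. -/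
open Metric Set

theorem stmt_1 {n : ℕ} (F : EuclideanSpace ℝ (Fin n) → ℝ)
    (hconv : ConvexOn ℝ Set.univ F) (hlsc : LowerSemicontinuous F)
    (Xs : Set (EuclideanSpace ℝ (Fin n))) (hXs : Xs = {y | ∀ z, F y ≤ F z})
    (hne : Xs.Nonempty) (Fstar : ℝ) (hFstar : ∀ y ∈ Xs, F y = Fstar)
    (σ : ℝ) (hσ : 0 < σ)
    (hgrowth : ∀ x, σ * infDist x Xs ^ 2 ≤ F x - Fstar)
    (μ : ℝ) (hμ : 0 < μ) (x p : EuclideanSpace ℝ (Fin n))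
    (hp : ∀ z, F p + ‖p - x‖ ^ 2 / (2 * μ) ≤ F z + ‖z - x‖ ^ 2 / (2 * μ)) :
    (σ / (1 + 2 * σ * μ)) * infDist x Xs ^ 2
      ≤ (F p + ‖p - x‖ ^ 2 / (2 * μ)) - Fstar := by
  set a := infDist p Xs with ha'
  set b := ‖p - x‖ with hb'
  set d := infDist x Xs with hd'
  have ha : 0 ≤ a := infDist_nonneg
  have hb : 0 ≤ b := norm_nonneg _
  have hd : 0 ≤ d := infDist_nonneg
  have htri : d ≤ a + b := by
    have := infDist_le_infDist_add_dist (x := x) (y := p) (s := Xs)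
    simpa [dist_eq_norm, norm_sub_rev, ha', hb', hd'] using this
  have hgp := hgrowth p
  have hden : 0 < 1 + 2 * σ * μ := by positivity
  have key : σ / (1 + 2 * σ * μ) * d ^ 2 ≤ σ * a ^ 2 + b ^ 2 / (2 * μ) := by
    rw [div_mul_eq_mul_div, div_le_iff₀ hden]
    have h1 : d ^ 2 ≤ (a + b) ^ 2 := by nlinarith
    have h2 : 0 ≤ (b - 2 * μ * σ * a) ^ 2 := sq_nonneg _
    have h3 : b ^ 2 / (2 * μ) * (2 * μ) = b ^ 2 := by field_simp
    nlinarith [mul_pos hμ hσ, sq_nonneg (a + b)]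
  linarith
end

section
/- Hölderian growth of the Moreau envelope: if F is convex, lower semicontinuous, proper with nonempty optimal set X* and satisfies F(x) - F* ≥ σ · dist_{X*}(x)^γ for all x, where γ ≥ 1 and σ > 0, then for all x and μ > 0, F_μ(x) - F* ≥ φ(γ) · min{ σ · dist_{X*}(x)^γ, dist_{X*}(x)²/(2μ) }, where φ(γ) = min_{λ ∈ [0,1]} (λ^γ + (1-λ)²). -/
open Metric Set

noncomputable def phi (γ : ℝ) : ℝ :=
  sInf ((fun l : ℝ => l ^ γ + (1 - l) ^ 2) '' Set.Icc (0 : ℝ) 1)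

lemma phi_le {γ l : ℝ} (h0 : 0 ≤ l) (h1 : l ≤ 1) : phi γ ≤ l ^ γ + (1 - l) ^ 2 := by
  apply csInf_le
  · refine ⟨0, ?_⟩
    rintro y ⟨t, ht, rfl⟩
    exact add_nonneg (Real.rpow_nonneg ht.1 γ) (sq_nonneg _)
  · exact ⟨l, ⟨h0, h1⟩, rfl⟩

theorem stmt_2 {n : ℕ} (F : EuclideanSpace ℝ (Fin n) → ℝ)
    (hconv : ConvexOn ℝ Set.univ F) (hlsc : LowerSemicontinuous F)
    (Xs : Set (EuclideanSpace ℝ (Fin n))) (hXs : Xs = {y | ∀ z, F y ≤ F z})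
    (hne : Xs.Nonempty) (Fstar : ℝ) (hFstar : ∀ y ∈ Xs, F y = Fstar)
    (γ σ : ℝ) (hγ : 1 ≤ γ) (hσ : 0 < σ)
    (hgrowth : ∀ x, σ * infDist x Xs ^ γ ≤ F x - Fstar)
    (μ : ℝ) (hμ : 0 < μ) (x p : EuclideanSpace ℝ (Fin n))
    (hp : ∀ z, F p + ‖p - x‖ ^ 2 / (2 * μ) ≤ F z + ‖z - x‖ ^ 2 / (2 * μ)) :
    phi γ * min (σ * infDist x Xs ^ γ) (infDist x Xs ^ 2 / (2 * μ))
      ≤ (F p + ‖p - x‖ ^ 2 / (2 * μ)) - Fstar := by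
  set D := infDist x Xs with hDdef
  set d := infDist p Xs with hddef
  have hD0 : 0 ≤ D := infDist_nonneg
  have hd0 : 0 ≤ d := infDist_nonneg
  have hγ0 : 0 ≤ γ := le_trans zero_le_one hγ
  have hgp : σ * d ^ γ ≤ F p - Fstar := hgrowth p
  have htri : D ≤ d + ‖p - x‖ := by
    have h := infDist_le_infDist_add_dist (x := x) (y := p) (s := Xs)
    rw [dist_eq_norm, norm_sub_rev] at h
    exact h
  have hq : 0 ≤ ‖p - x‖ ^ 2 / (2 * μ) := by positivity
  have hmin0 : 0 ≤ min (σ * D ^ γ) (D ^ 2 / (2 * μ)) :=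
    le_min (mul_nonneg hσ.le (Real.rpow_nonneg hD0 γ)) (by positivity)
  by_cases hcase : D ≤ d
  · have hphi1 : phi γ ≤ 1 := by
      have := phi_le (γ := γ) (l := 1) zero_le_one le_rfl
      simpa [Real.one_rpow] using this
    have h1 : σ * D ^ γ ≤ σ * d ^ γ :=
      mul_le_mul_of_nonneg_left (Real.rpow_le_rpow hD0 hcase hγ0) hσ.le
    have h2 : min (σ * D ^ γ) (D ^ 2 / (2 * μ)) ≤ σ * D ^ γ := min_le_left _ _
    have h3 : phi γ * min (σ * D ^ γ) (D ^ 2 / (2 * μ)) ≤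
        1 * min (σ * D ^ γ) (D ^ 2 / (2 * μ)) :=
      mul_le_mul_of_nonneg_right hphi1 hmin0
    linarith
  · push_neg at hcase
    have hDpos : 0 < D := lt_of_le_of_lt hd0 hcase
    set l := d / D with hldef
    have hl0 : 0 ≤ l := div_nonneg hd0 hD0
    have hl1 : l ≤ 1 := (div_le_one hDpos).mpr hcase.le
    have hdl : d = l * D := by rw [hldef, div_mul_cancel₀ d hDpos.ne']
    have hdγ : d ^ γ = l ^ γ * D ^ γ := by
      rw [hdl, Real.mul_rpow hl0 hD0]
    have hnorm : (D - d) ^ 2 ≤ ‖p - x‖ ^ 2 := by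
      have h1 : D - d ≤ ‖p - x‖ := by linarith
      have h2 : 0 ≤ D - d := by linarith
      exact pow_le_pow_left₀ h2 h1 2
    have hDd : (D - d) ^ 2 = (1 - l) ^ 2 * D ^ 2 := by
      rw [hdl]; ring
    have hlγ0 : 0 ≤ l ^ γ := Real.rpow_nonneg hl0 γ
    have hm1 : min (σ * D ^ γ) (D ^ 2 / (2 * μ)) ≤ σ * D ^ γ := min_le_left _ _
    have hm2 : min (σ * D ^ γ) (D ^ 2 / (2 * μ)) ≤ D ^ 2 / (2 * μ) := min_le_right _ _
    have key : phi γ * min (σ * D ^ γ) (D ^ 2 / (2 * μ)) ≤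
        (l ^ γ + (1 - l) ^ 2) * min (σ * D ^ γ) (D ^ 2 / (2 * μ)) :=
      mul_le_mul_of_nonneg_right (phi_le hl0 hl1) hmin0
    have k1 : l ^ γ * min (σ * D ^ γ) (D ^ 2 / (2 * μ)) ≤ l ^ γ * (σ * D ^ γ) :=
      mul_le_mul_of_nonneg_left hm1 hlγ0
    have k2 : (1 - l) ^ 2 * min (σ * D ^ γ) (D ^ 2 / (2 * μ)) ≤
        (1 - l) ^ 2 * (D ^ 2 / (2 * μ)) :=
      mul_le_mul_of_nonneg_left hm2 (sq_nonneg _)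
    have e1 : l ^ γ * (σ * D ^ γ) = σ * d ^ γ := by rw [hdγ]; ring
    have e2 : (1 - l) ^ 2 * (D ^ 2 / (2 * μ)) = (D - d) ^ 2 / (2 * μ) := by
      rw [hDd]; ring
    have hq2 : (D - d) ^ 2 / (2 * μ) ≤ ‖p - x‖ ^ 2 / (2 * μ) :=
      div_le_div_of_nonneg_right hnorm (by positivity) |>.trans_eq rfl
    nlinarith [key, k1, k2]
end

section
/- One-step exact proximal point when μ is large under weak sharp minima: if F is convex, lower semicontinuous, proper with weak sharp minima F(x) - F* ≥ σ · dist_{X*}(x), and if for a point x the inequality ‖∇F_μ(x)‖ < σ holds (with μ > 0), then prox_μF(x) = π_{X*}(x), the Euclidean projection of x onto X*; in particular prox_μF(x) ∈ X*. -/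
open Metric Set

theorem stmt_6 {n : ℕ} (F : EuclideanSpace ℝ (Fin n) → ℝ)
    (hconv : ConvexOn ℝ Set.univ F) (hlsc : LowerSemicontinuous F)
    (Xs : Set (EuclideanSpace ℝ (Fin n))) (hXs : Xs = {y | ∀ z, F y ≤ F z})
    (hne : Xs.Nonempty) (Fstar : ℝ) (hFstar : ∀ y ∈ Xs, F y = Fstar)
    (σ : ℝ) (hσ : 0 < σ)
    (hgrowth : ∀ x, σ * infDist x Xs ≤ F x - Fstar)
    (μ : ℝ) (hμ : 0 < μ) (x p : EuclideanSpace ℝ (Fin n))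
    (hp : ∀ z, F p + ‖p - x‖ ^ 2 / (2 * μ) ≤ F z + ‖z - x‖ ^ 2 / (2 * μ))
    (hgradsmall : ‖μ⁻¹ • (x - p)‖ < σ) :
    p ∈ Xs ∧ ∀ y ∈ Xs, ‖x - p‖ ≤ ‖x - y‖ := by
  have hμ2 : (0:ℝ) < 2 * μ := by linarith
  -- key inequality
  have key : ∀ q ∈ Xs, ∀ t : ℝ, 0 < t → t ≤ 1 →
      F p - Fstar ≤ ‖p - x‖ * ‖q - p‖ / μ + t * ‖q - p‖ ^ 2 / (2 * μ) := by
    intro q hq t ht ht1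
    set z : EuclideanSpace ℝ (Fin n) := p + t • (q - p) with hz
    set I : ℝ := inner ℝ (p - x) (q - p) with hI
    set N : ℝ := ‖q - p‖ ^ 2 with hN
    have hFz : F z ≤ (1 - t) * F p + t * Fstar := by
      have := hconv.2 (mem_univ p) (mem_univ q) (by linarith : (0:ℝ) ≤ 1 - t) ht.le (by ring)
      have hzeq : (1 - t) • p + t • q = z := by rw [hz]; module
      rw [hzeq] at this
      simpa [hFstar q hq, smul_eq_mul] using this
    have hnorm : ‖z - x‖ ^ 2 = ‖p - x‖ ^ 2 + (2 * t * I + t ^ 2 * N) := by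
      have hzx : z - x = (p - x) + t • (q - p) := by rw [hz]; abel
      rw [hzx, @norm_add_sq_real, real_inner_smul_right, norm_smul, Real.norm_eq_abs,
        abs_of_pos ht, mul_pow, hI, hN]
      ring
    have h1 := hp z
    rw [hnorm, add_div] at h1
    have h2 : t * (F p - Fstar) ≤ (2 * t * I + t ^ 2 * N) / (2 * μ) := by linarith
    rw [le_div_iff₀ hμ2] at h2
    have h2' : t * ((F p - Fstar) * (2 * μ)) ≤ t * (2 * I + t * N) := by nlinarith
    have h3 : (F p - Fstar) * (2 * μ) ≤ 2 * I + t * N := le_of_mul_le_mul_left h2' ht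
    have hip : I ≤ ‖p - x‖ * ‖q - p‖ := real_inner_le_norm _ _
    have h4 : (F p - Fstar) * (2 * μ) ≤ 2 * (‖p - x‖ * ‖q - p‖) + t * N := by linarith
    rw [← le_div_iff₀ hμ2] at h4
    calc F p - Fstar ≤ (2 * (‖p - x‖ * ‖q - p‖) + t * N) / (2 * μ) := h4
      _ = ‖p - x‖ * ‖q - p‖ / μ + t * N / (2 * μ) := by field_simp
  -- gradient bound
  have hc : ‖p - x‖ / μ < σ := by
    have : ‖μ⁻¹ • (x - p)‖ = ‖x - p‖ / μ := by
      rw [norm_smul, Real.norm_eq_abs, abs_of_pos (inv_pos.2 hμ)]; ring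
    rw [this, ← norm_neg, neg_sub] at hgradsmall
    exact hgradsmall
  set c : ℝ := ‖p - x‖ / μ with hcdef
  have hc0 : 0 ≤ c := by positivity
  set d : ℝ := infDist p Xs with hd
  have hd0 : 0 ≤ d := infDist_nonneg
  have hdzero : d = 0 := by
    by_contra hne0
    have hdpos : 0 < d := lt_of_le_of_ne hd0 (Ne.symm hne0)
    set ε : ℝ := d * (σ - c) / (2 * (c + 1)) with hε
    have hεpos : 0 < ε := by
      apply div_pos (mul_pos hdpos (by linarith)) (by linarith)
    obtain ⟨q, hq, hdq⟩ := (infDist_lt_iff hne).1 (by rw [← hd]; linarith : infDist p Xs < d + ε)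
    rw [dist_eq_norm] at hdq
    have hqp : ‖q - p‖ < d + ε := by rwa [← norm_neg, neg_sub]
    have hqpd : d ≤ ‖q - p‖ := by
      rw [← norm_neg, neg_sub, ← dist_eq_norm]
      exact infDist_le_dist_of_mem hq
    -- choose t
    set t : ℝ := min 1 (2 * μ * ε / (d + ε) ^ 2) with htdef
    have htpos : 0 < t := lt_min one_pos (by positivity)
    have ht1 : t ≤ 1 := min_le_left _ _
    have hkey := key q hq t htpos ht1
    have hgr := hgrowth p
    rw [← hd] at hgr
    -- bound terms
    have hb1 : ‖p - x‖ * ‖q - p‖ / μ ≤ c * (d + ε) := by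
      have h1 : ‖p - x‖ * ‖q - p‖ / μ ≤ ‖p - x‖ * (d + ε) / μ := by
        gcongr
      calc ‖p - x‖ * ‖q - p‖ / μ ≤ ‖p - x‖ * (d + ε) / μ := h1
        _ = c * (d + ε) := by rw [hcdef]; ring
    have hb2 : t * ‖q - p‖ ^ 2 / (2 * μ) ≤ ε := by
      have h1 : t * ‖q - p‖ ^ 2 ≤ (2 * μ * ε / (d + ε) ^ 2) * (d + ε) ^ 2 := by
        apply mul_le_mul (min_le_right _ _) (by nlinarith) (by positivity) (by positivity)
      have h2 : (2 * μ * ε / (d + ε) ^ 2) * (d + ε) ^ 2 = 2 * μ * ε := by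
        field_simp
      rw [h2] at h1
      rw [div_le_iff₀ hμ2]
      linarith
    have hcd : c * (d + ε) + ε < σ * d := by
      have : ε * (c + 1) = d * (σ - c) / 2 := by
        rw [hε]; field_simp
      nlinarith
    linarith
  constructor
  · have hclosed : IsClosed Xs := by
      rw [hXs]
      have : {y : EuclideanSpace ℝ (Fin n) | ∀ z, F y ≤ F z} = ⋂ z, {y | F y ≤ F z} := by
        ext y; simp
      rw [this]
      exact isClosed_iInter fun z => hlsc.isClosed_preimage (F z)
    exact (hclosed.mem_iff_infDist_zero hne).2 hdzero
  · intro y hy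
    have h1 := hp y
    have hpXs : p ∈ Xs := by
      have hclosed : IsClosed Xs := by
        rw [hXs]
        have : {y : EuclideanSpace ℝ (Fin n) | ∀ z, F y ≤ F z} = ⋂ z, {y | F y ≤ F z} := by
          ext y; simp
        rw [this]
        exact isClosed_iInter fun z => hlsc.isClosed_preimage (F z)
      exact (hclosed.mem_iff_infDist_zero hne).2 hdzero
    have : F p = F y := by rw [hFstar p hpXs, hFstar y hy]
    have h2 : ‖p - x‖ ^ 2 ≤ ‖y - x‖ ^ 2 := by
      have h3 : ‖p - x‖ ^ 2 / (2 * μ) ≤ ‖y - x‖ ^ 2 / (2 * μ) := by linarith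
      rw [div_le_div_iff₀ hμ2 hμ2] at h3
      nlinarith [h3]
    have h3 : ‖p - x‖ ≤ ‖y - x‖ := by
      nlinarith [norm_nonneg (p - x), norm_nonneg (y - x), h2]
    rw [← norm_neg (x - p), neg_sub, ← norm_neg (x - y), neg_sub]
    exact h3
end

section
/- One step of inexact proximal point decreases distance: let F be convex, lower semicontinuous, proper with nonempty optimal set X*, μ > 0, and x⁺ a point with ‖x⁺ - prox_μF(x)‖ ≤ δ. Then dist_{X*}(x⁺) ≤ sqrt( dist_{X*}(x)² - 2μ(F_μ(x) - F*) ) + δ, and consequently dist_{X*}(x⁺) ≤ dist_{X*}(x) - μ (F_μ(x) - F*)/dist_{X*}(x) + δ whenever x ∉ X*. -/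
open Metric Set RealInnerProductSpace

set_option maxHeartbeats 1000000

lemma aux_div (c d : ℝ) (h : ∀ t : ℝ, 0 < t → t ≤ 1 → 0 ≤ c + t * d) : 0 ≤ c := by
  by_contra hc
  push_neg at hc
  rcases le_or_gt d 0 with hd | hd
  · have := h 1 one_pos le_rfl
    nlinarith
  · have ht0 : (0:ℝ) < min 1 (-c / (2 * d)) :=
      lt_min one_pos (div_pos (by linarith) (by linarith))
    have h1 := h _ ht0 (min_le_left _ _)
    have h2 : min 1 (-c / (2 * d)) ≤ -c / (2 * d) := min_le_right _ _
    have h3 : min 1 (-c / (2 * d)) * (2 * d) ≤ -c := (le_div_iff₀ (by linarith)).mp h2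
    nlinarith

theorem stmt_7 {n : ℕ} (F : EuclideanSpace ℝ (Fin n) → ℝ)
    (hconv : ConvexOn ℝ Set.univ F) (hlsc : LowerSemicontinuous F)
    (Xs : Set (EuclideanSpace ℝ (Fin n))) (hXs : Xs = {y | ∀ z, F y ≤ F z})
    (hne : Xs.Nonempty) (Fstar : ℝ) (hFstar : ∀ y ∈ Xs, F y = Fstar)
    (μ δ : ℝ) (hμ : 0 < μ) (hδ : 0 ≤ δ)
    (x p xp : EuclideanSpace ℝ (Fin n))
    (hp : ∀ z, F p + ‖p - x‖ ^ 2 / (2 * μ) ≤ F z + ‖z - x‖ ^ 2 / (2 * μ))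
    (hxp : ‖xp - p‖ ≤ δ) :
    infDist xp Xs
      ≤ Real.sqrt (infDist x Xs ^ 2
          - 2 * μ * ((F p + ‖p - x‖ ^ 2 / (2 * μ)) - Fstar)) + δ ∧
    (x ∉ Xs →
      infDist xp Xs
        ≤ infDist x Xs
            - μ * ((F p + ‖p - x‖ ^ 2 / (2 * μ)) - Fstar) / infDist x Xs + δ) := by
  have hclosed : IsClosed Xs := by
    rw [hXs]
    have heq : {y | ∀ z, F y ≤ F z} = ⋂ z, F ⁻¹' Iic (F z) := by
      ext y; simp [Set.mem_iInter]
    rw [heq]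
    exact isClosed_iInter fun z => hlsc.isClosed_preimage (F z)
  obtain ⟨q, hq, hdq⟩ := hclosed.exists_infDist_eq_dist hne x
  have hFq : F q = Fstar := hFstar q hq
  have hqmin : ∀ z, F q ≤ F z := by have h := hq; rw [hXs] at h; exact h
  set A : ℝ := (inner ℝ (p - x) (q - p) : ℝ) with hA
  clear_value A
  -- key inner product inequality
  have key : μ * (F p - Fstar) ≤ A := by
    have h0 : 0 ≤ A / μ - (F p - Fstar) + 0 * (‖q - p‖ ^ 2 / (2 * μ)) → True := fun _ => trivial
    have hmain : 0 ≤ (A / μ - (F p - Fstar)) := by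
      apply aux_div (A / μ - (F p - Fstar)) (‖q - p‖ ^ 2 / (2 * μ))
      intro t ht0 ht1
      have hz := hp ((1 - t) • p + t • q)
      have hc := hconv.2 (Set.mem_univ p) (Set.mem_univ q) (by linarith : (0:ℝ) ≤ 1 - t)
        ht0.le (by ring)
      have hnorm : ‖(1 - t) • p + t • q - x‖ ^ 2
          = ‖p - x‖ ^ 2 + 2 * (t * A) + t ^ 2 * ‖q - p‖ ^ 2 := by
        have hzx : (1 - t) • p + t • q - x = (p - x) + t • (q - p) := by module
        rw [hzx, norm_add_sq_real, real_inner_smul_right, norm_smul]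
        simp [mul_pow, Real.norm_eq_abs, sq_abs, hA]
      rw [hnorm] at hz
      have expand : (‖p - x‖ ^ 2 + 2 * (t * A) + t ^ 2 * ‖q - p‖ ^ 2) / (2 * μ)
          = ‖p - x‖ ^ 2 / (2 * μ) + t * (A / μ) + t ^ 2 * (‖q - p‖ ^ 2 / (2 * μ)) := by
        field_simp
      rw [expand] at hz
      have hc' : F ((1 - t) • p + t • q) ≤ (1 - t) * F p + t * Fstar := by
        rw [← hFq]; simpa using hc
      have hineq : t * (F p - Fstar) ≤ t * (A / μ) + t ^ 2 * (‖q - p‖ ^ 2 / (2 * μ)) := by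
        nlinarith [hz, hc']
      nlinarith [hineq, ht0, sq_nonneg t]
    have h2 : F p - Fstar ≤ A / μ := by linarith
    calc μ * (F p - Fstar) ≤ μ * (A / μ) := by nlinarith
      _ = A := by field_simp
  -- quadratic estimate
  set G : ℝ := (F p + ‖p - x‖ ^ 2 / (2 * μ)) - Fstar with hG
  set d : ℝ := infDist x Xs with hd
  clear_value G
  have hdnorm : d = ‖x - q‖ := by rw [hdq, dist_eq_norm]
  clear_value d
  have hexp : ‖x - q‖ ^ 2 = ‖x - p‖ ^ 2 + 2 * A + ‖q - p‖ ^ 2 := by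
    have hxq : x - q = (x - p) + (p - q) := by abel
    rw [hxq, norm_add_sq_real]
    have h1 : (inner ℝ (x - p) (p - q) : ℝ) = A := by
      rw [hA, show x - p = -(p - x) by abel, show p - q = -(q - p) by abel, inner_neg_neg]
    have h2 : ‖p - q‖ = ‖q - p‖ := norm_sub_rev _ _
    rw [h1, h2]
  have hnn : ‖x - p‖ = ‖p - x‖ := norm_sub_rev _ _
  have h2muG : 2 * μ * G = 2 * μ * (F p - Fstar) + ‖p - x‖ ^ 2 := by
    rw [hG]; field_simp; ring
  have hQ : ‖q - p‖ ^ 2 ≤ d ^ 2 - 2 * μ * G := by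
    rw [hdnorm, hexp, hnn]
    nlinarith [key]
  have hDnn : 0 ≤ d ^ 2 - 2 * μ * G := le_trans (sq_nonneg _) hQ
  have hqp_le : ‖q - p‖ ≤ Real.sqrt (d ^ 2 - 2 * μ * G) := by
    rw [show ‖q - p‖ = Real.sqrt (‖q - p‖ ^ 2) from (Real.sqrt_sq (norm_nonneg _)).symm]
    exact Real.sqrt_le_sqrt hQ
  have part1 : infDist xp Xs ≤ Real.sqrt (d ^ 2 - 2 * μ * G) + δ := by
    calc infDist xp Xs ≤ dist xp q := infDist_le_dist_of_mem hq
      _ ≤ dist xp p + dist p q := dist_triangle _ _ _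
      _ = ‖xp - p‖ + ‖p - q‖ := by rw [dist_eq_norm, dist_eq_norm]
      _ = ‖xp - p‖ + ‖q - p‖ := by rw [norm_sub_rev p q]
      _ ≤ δ + Real.sqrt (d ^ 2 - 2 * μ * G) := add_le_add hxp hqp_le
      _ = _ := by ring
  refine ⟨part1, fun hx => ?_⟩
  have hdpos : 0 < d := by
    rw [hd]; exact (hclosed.notMem_iff_infDist_pos hne).mp hx
  have hGnn : 0 ≤ G := by
    have := hqmin p
    rw [hFq] at this
    have : 0 ≤ ‖p - x‖ ^ 2 / (2 * μ) := by positivity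
    rw [hG]; nlinarith [hqmin p, hFq]
  have hμGd : μ * G / d ≤ d := by
    rw [div_le_iff₀ hdpos]
    have h1 : 0 ≤ μ * G := mul_nonneg hμ.le hGnn
    have h2 : d * d = d ^ 2 := (sq d).symm
    linarith [hDnn]
  have hsqrt : Real.sqrt (d ^ 2 - 2 * μ * G) ≤ d - μ * G / d := by
    have hsq : d ^ 2 - 2 * μ * G ≤ (d - μ * G / d) ^ 2 := by
      have hde : d * (μ * G / d) = μ * G := by
        rw [mul_div_assoc', mul_comm d (μ * G), mul_div_assoc]
        rw [div_self (ne_of_gt hdpos), mul_one]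
      nlinarith [sq_nonneg (μ * G / d), hde]
    calc Real.sqrt (d ^ 2 - 2 * μ * G) ≤ Real.sqrt ((d - μ * G / d) ^ 2) :=
          Real.sqrt_le_sqrt hsq
      _ = d - μ * G / d := Real.sqrt_sq (by linarith)
  calc infDist xp Xs ≤ Real.sqrt (d ^ 2 - 2 * μ * G) + δ := part1
    _ ≤ d - μ * G / d + δ := by linarith
end

section
/- Inexact PPA one-step recurrence under weak sharp minima: let F be convex, lower semicontinuous, proper satisfying F(x) - F* ≥ σ · dist_{X*}(x), let μ > 0 and let x⁺ satisfy ‖x⁺ - prox_μF(x)‖ ≤ δ. Then dist_{X*}(x⁺) ≤ max{ dist_{X*}(x) - μσ, 0 } + δ. -/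
open Metric Set

open RealInnerProductSpace in
lemma prox_subgrad_aux {n : ℕ} (F : EuclideanSpace ℝ (Fin n) → ℝ)
    (hconv : ConvexOn ℝ Set.univ F) (μ : ℝ) (hμ : 0 < μ)
    (x p : EuclideanSpace ℝ (Fin n))
    (hp : ∀ z, F p + ‖p - x‖ ^ 2 / (2 * μ) ≤ F z + ‖z - x‖ ^ 2 / (2 * μ))
    (z : EuclideanSpace ℝ (Fin n)) :
    μ * (F p - F z) ≤ ⟪p - x, z - p⟫ := by
  refine le_of_forall_pos_le_add fun ε hε => ?_
  set B : ℝ := ‖z - p‖ ^ 2 with hB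
  have hB0 : 0 ≤ B := by positivity
  have h1 : 0 < B + 1 := by linarith
  set t : ℝ := min 1 (2 * ε / (B + 1)) with ht
  have ht0 : 0 < t := lt_min one_pos (by positivity)
  have ht1 : t ≤ 1 := min_le_left _ _
  have htB : t * B ≤ 2 * ε := by
    have h2 : t * (B + 1) ≤ 2 * ε := by
      have := min_le_right 1 (2 * ε / (B + 1))
      calc t * (B + 1) ≤ (2 * ε / (B + 1)) * (B + 1) := by
            exact mul_le_mul_of_nonneg_right this h1.le
        _ = 2 * ε := by field_simp
    nlinarith
  have hc := hconv.2 (Set.mem_univ p) (Set.mem_univ z)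
    (by linarith : (0:ℝ) ≤ 1 - t) ht0.le (by ring)
  have hz := hp ((1 - t) • p + t • z)
  have heq : ((1 - t) • p + t • z) - x = (p - x) + t • (z - p) := by module
  have hnorm : ‖((1 - t) • p + t • z) - x‖ ^ 2
      = ‖p - x‖ ^ 2 + 2 * (t * ⟪p - x, z - p⟫) + t ^ 2 * B := by
    rw [heq, @norm_add_sq_real, real_inner_smul_right, norm_smul]
    simp [hB, mul_pow, abs_of_nonneg ht0.le]
  rw [hnorm] at hz
  simp only [smul_eq_mul] at hc
  -- from hz and hc get: t * (F p - F z) * (2 * μ) ≤ 2 * t * I + t^2 * B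
  set I : ℝ := ⟪p - x, z - p⟫ with hI
  have h3 : t * (F p - F z) ≤ (2 * (t * I) + t ^ 2 * B) / (2 * μ) := by
    have hadd : (‖p - x‖ ^ 2 + 2 * (t * I) + t ^ 2 * B) / (2 * μ)
        = ‖p - x‖ ^ 2 / (2 * μ) + (2 * (t * I) + t ^ 2 * B) / (2 * μ) := by ring
    rw [hadd] at hz
    linarith
  have h4 : t * (F p - F z) * (2 * μ) ≤ 2 * (t * I) + t ^ 2 * B :=
    (le_div_iff₀ (by positivity)).mp h3
  have h5 : t * (μ * (F p - F z)) ≤ t * (I + ε) := by nlinarith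
  exact le_of_mul_le_mul_left h5 ht0

theorem stmt_9 {n : ℕ} (F : EuclideanSpace ℝ (Fin n) → ℝ)
    (hconv : ConvexOn ℝ Set.univ F) (hlsc : LowerSemicontinuous F)
    (Xs : Set (EuclideanSpace ℝ (Fin n))) (hXs : Xs = {y | ∀ z, F y ≤ F z})
    (hne : Xs.Nonempty) (Fstar : ℝ) (hFstar : ∀ y ∈ Xs, F y = Fstar)
    (σ : ℝ) (hσ : 0 < σ)
    (hgrowth : ∀ x, σ * infDist x Xs ≤ F x - Fstar)
    (μ δ : ℝ) (hμ : 0 < μ) (hδ : 0 ≤ δ)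
    (x p xp : EuclideanSpace ℝ (Fin n))
    (hp : ∀ z, F p + ‖p - x‖ ^ 2 / (2 * μ) ≤ F z + ‖z - x‖ ^ 2 / (2 * μ))
    (hxp : ‖xp - p‖ ≤ δ) :
    infDist xp Xs ≤ max (infDist x Xs - μ * σ) 0 + δ := by
  have hclosed : IsClosed Xs := by
    rw [hXs]
    have he : {y : EuclideanSpace ℝ (Fin n) | ∀ z, F y ≤ F z}
        = ⋂ z, F ⁻¹' Set.Iic (F z) := by
      ext y; simp [Set.mem_iInter]
    rw [he]
    exact isClosed_iInter fun z => hlsc.isClosed_preimage (F z)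
  obtain ⟨q, hq, hq2⟩ := hclosed.exists_infDist_eq_dist hne p
  obtain ⟨q', hq', hq'2⟩ := hclosed.exists_infDist_eq_dist hne x
  have hFq : F q = Fstar := hFstar q hq
  have hFq' : F q' = Fstar := hFstar q' hq'
  have htri : infDist xp Xs ≤ infDist p Xs + dist xp p :=
    infDist_le_infDist_add_dist
  have hdistxp : dist xp p ≤ δ := by rwa [dist_eq_norm]
  have hmax0 : (0:ℝ) ≤ max (infDist x Xs - μ * σ) 0 := le_max_right _ _
  set dp := infDist p Xs with hdp
  rcases eq_or_lt_of_le (infDist_nonneg : (0:ℝ) ≤ dp) with h0 | h0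
  · linarith
  · -- dp > 0
    have hgrow := hgrowth p
    -- Step A : μ * σ ≤ ‖p - x‖
    have keyq := prox_subgrad_aux F hconv μ hμ x p hp q
    have hcs : (inner ℝ (p - x) (q - p) : ℝ) ≤ ‖p - x‖ * ‖q - p‖ :=
      real_inner_le_norm _ _
    have hqp : ‖q - p‖ = dp := by rw [hq2, dist_eq_norm, norm_sub_rev]
    have hA : μ * σ ≤ ‖p - x‖ := by
      have : μ * (σ * dp) ≤ ‖p - x‖ * dp := by
        calc μ * (σ * dp) ≤ μ * (F p - Fstar) := by nlinarith
          _ = μ * (F p - F q) := by rw [hFq]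
          _ ≤ (inner ℝ (p - x) (q - p) : ℝ) := keyq
          _ ≤ ‖p - x‖ * ‖q - p‖ := hcs
          _ = ‖p - x‖ * dp := by rw [hqp]
      nlinarith
    -- Step B
    have keyq' := prox_subgrad_aux F hconv μ hμ x p hp q'
    have hIB : μ * (σ * dp) ≤ (inner ℝ (p - x) (q' - p) : ℝ) := by
      calc μ * (σ * dp) ≤ μ * (F p - Fstar) := by nlinarith
        _ = μ * (F p - F q') := by rw [hFq']
        _ ≤ _ := keyq'
    have hinner_eq : (inner ℝ (x - p) (p - q') : ℝ) = inner ℝ (p - x) (q' - p) := by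
      rw [← neg_sub p x, ← neg_sub q' p, inner_neg_neg]
    have hdple : dp ≤ ‖p - q'‖ := by
      rw [← dist_eq_norm]; exact infDist_le_dist_of_mem hq'
    have hsplit : x - q' = (x - p) + (p - q') := by abel
    have hnorm : ‖x - q'‖ ^ 2 = ‖x - p‖ ^ 2
        + 2 * (inner ℝ (x - p) (p - q') : ℝ) + ‖p - q'‖ ^ 2 := by
      rw [hsplit, @norm_add_sq_real]
    have hxq' : infDist x Xs = ‖x - q'‖ := by rw [hq'2, dist_eq_norm]
    have hsq : (μ * σ + dp) ^ 2 ≤ ‖x - q'‖ ^ 2 := by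
      have hxp' : ‖x - p‖ = ‖p - x‖ := norm_sub_rev _ _
      rw [hnorm, hinner_eq, hxp']
      have hA2 : (μ * σ) ^ 2 ≤ ‖p - x‖ ^ 2 := pow_le_pow_left₀ (mul_pos hμ hσ).le hA 2
      have hdp2 : dp ^ 2 ≤ ‖p - q'‖ ^ 2 := pow_le_pow_left₀ h0.le hdple 2
      have hexp : (μ * σ + dp) ^ 2 = (μ * σ) ^ 2 + 2 * (μ * (σ * dp)) + dp ^ 2 := by ring
      rw [hexp]
      linarith
    have hfin : μ * σ + dp ≤ ‖x - q'‖ :=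
      (pow_le_pow_iff_left₀ (add_nonneg (mul_pos hμ hσ).le infDist_nonneg)
        (norm_nonneg _) two_ne_zero).mp hsq
    have : dp ≤ infDist x Xs - μ * σ := by rw [hxq']; linarith
    have hle : infDist x Xs - μ * σ ≤ max (infDist x Xs - μ * σ) 0 :=
      le_max_left _ _
    linarith
end

section
/- Inexact PPA one-step linear contraction under quadratic growth: let F be convex, lower semicontinuous, proper satisfying F(x) - F* ≥ σ · dist_{X*}(x)², let μ > 0, and let x⁺ satisfy ‖x⁺ - prox_μF(x)‖ ≤ δ. Then dist_{X*}(x⁺) ≤ dist_{X*}(x)/√(1 + 2μσ) + δ. -/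
open Metric Set

theorem stmt_10 {n : ℕ} (F : EuclideanSpace ℝ (Fin n) → ℝ)
    (hconv : ConvexOn ℝ Set.univ F) (hlsc : LowerSemicontinuous F)
    (Xs : Set (EuclideanSpace ℝ (Fin n))) (hXs : Xs = {y | ∀ z, F y ≤ F z})
    (hne : Xs.Nonempty) (Fstar : ℝ) (hFstar : ∀ y ∈ Xs, F y = Fstar)
    (σ : ℝ) (hσ : 0 < σ)
    (hgrowth : ∀ x, σ * infDist x Xs ^ 2 ≤ F x - Fstar)
    (μ δ : ℝ) (hμ : 0 < μ) (hδ : 0 ≤ δ)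
    (x p xp : EuclideanSpace ℝ (Fin n))
    (hp : ∀ z, F p + ‖p - x‖ ^ 2 / (2 * μ) ≤ F z + ‖z - x‖ ^ 2 / (2 * μ))
    (hxp : ‖xp - p‖ ≤ δ) :
    infDist xp Xs ≤ infDist x Xs / Real.sqrt (1 + 2 * μ * σ) + δ := by
  have hclosed : IsClosed Xs := by
    rw [hXs]
    have : {y : EuclideanSpace ℝ (Fin n) | ∀ z, F y ≤ F z}
        = ⋂ z, F ⁻¹' Iic (F z) := by ext y; simp [mem_iInter]
    rw [this]
    exact isClosed_iInter fun z => hlsc.isClosed_preimage (F z)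
  obtain ⟨y, hyXs, hyd⟩ := hclosed.exists_infDist_eq_dist hne x
  set d := infDist x Xs with hd
  set dp := infDist p Xs with hdp
  have hd0 : 0 ≤ d := infDist_nonneg
  have hdp0 : 0 ≤ dp := infDist_nonneg
  have hFy : F y = Fstar := hFstar y hyXs
  have hdpy : dp ≤ ‖y - p‖ := by
    rw [hdp, ← dist_eq_norm']
    exact infDist_le_dist_of_mem hyXs
  have hdx : d = ‖y - x‖ := by rw [hyd, dist_eq_norm']
  set I : ℝ := inner ℝ (p - x) (y - p) with hI
  have hexp : d ^ 2 = ‖p - x‖ ^ 2 + 2 * I + ‖y - p‖ ^ 2 := by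
    have h : y - x = (p - x) + (y - p) := by abel
    rw [hdx, h, norm_add_sq_real, ← hI]
  have key : ∀ t : ℝ, 0 < t → t ≤ 1 →
      (1 + 2 * μ * σ) * dp ^ 2 ≤ d ^ 2 + t * dp ^ 2 := by
    intro t ht0 ht1
    have hzexp : ‖((1 - t) • p + t • y) - x‖ ^ 2
        = ‖p - x‖ ^ 2 + (2 * t * I + t ^ 2 * ‖y - p‖ ^ 2) := by
      have h : ((1 - t) • p + t • y) - x = (p - x) + t • (y - p) := by
        module
      rw [h, norm_add_sq_real, real_inner_smul_right, norm_smul, ← hI,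
        Real.norm_eq_abs, abs_of_pos ht0]
      ring
    have hcv : F ((1 - t) • p + t • y) ≤ (1 - t) * F p + t * F y :=
      hconv.2 (mem_univ p) (mem_univ y) (by linarith) (le_of_lt ht0) (by ring)
    have h1 := hp ((1 - t) • p + t • y)
    rw [hzexp] at h1
    have hsplit : (‖p - x‖ ^ 2 + (2 * t * I + t ^ 2 * ‖y - p‖ ^ 2)) / (2 * μ)
        = ‖p - x‖ ^ 2 / (2 * μ) + (2 * t * I + t ^ 2 * ‖y - p‖ ^ 2) / (2 * μ) := by
      ring
    have h2 : t * (F p - Fstar) ≤ (2 * t * I + t ^ 2 * ‖y - p‖ ^ 2) / (2 * μ) := by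
      have hring : t * (F p - Fstar) = F p - ((1 - t) * F p + t * Fstar) := by ring
      rw [hring, hFy] at *
      linarith [hsplit, h1, hcv]
    have hfac : (2 * t * I + t ^ 2 * ‖y - p‖ ^ 2) / (2 * μ)
        = t * ((2 * I + t * ‖y - p‖ ^ 2) / (2 * μ)) := by ring
    rw [hfac] at h2
    have h3 : F p - Fstar ≤ (2 * I + t * ‖y - p‖ ^ 2) / (2 * μ) :=
      (mul_le_mul_iff_right₀ ht0).mp h2
    have hg := hgrowth p
    rw [← hdp] at hg
    have h4 : 2 * μ * (σ * dp ^ 2) ≤ 2 * I + t * ‖y - p‖ ^ 2 := by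
      have := mul_le_mul_of_nonneg_left (hg.trans h3) (by linarith : (0:ℝ) ≤ 2 * μ)
      calc 2 * μ * (σ * dp ^ 2) ≤ 2 * μ * ((2 * I + t * ‖y - p‖ ^ 2) / (2 * μ)) := this
        _ = 2 * I + t * ‖y - p‖ ^ 2 := by field_simp
    have hyp2 : dp ^ 2 ≤ ‖y - p‖ ^ 2 := by nlinarith [norm_nonneg (y - p)]
    have hprod : 0 ≤ (1 - t) * (‖y - p‖ ^ 2 - dp ^ 2) :=
      mul_nonneg (by linarith) (by linarith)
    linarith [h4, hexp, sq_nonneg ‖p - x‖, hprod]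
  have hmain : (1 + 2 * μ * σ) * dp ^ 2 ≤ d ^ 2 := by
    apply le_of_forall_pos_le_add
    intro ε hε
    rcases eq_or_lt_of_le hdp0 with h0 | h0
    · have hz : (1 + 2 * μ * σ) * dp ^ 2 = 0 := by rw [← h0]; ring
      rw [hz]; positivity
    · set t := min 1 (ε / dp ^ 2) with htdef
      have ht0 : 0 < t := lt_min one_pos (div_pos hε (pow_pos h0 2))
      have hk := key t ht0 (min_le_left _ _)
      have htε : t * dp ^ 2 ≤ ε := by
        calc t * dp ^ 2 ≤ (ε / dp ^ 2) * dp ^ 2 :=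
              mul_le_mul_of_nonneg_right (min_le_right _ _) (by positivity)
          _ = ε := by field_simp
      linarith
  set s := Real.sqrt (1 + 2 * μ * σ) with hs
  have hs2 : s ^ 2 = 1 + 2 * μ * σ := Real.sq_sqrt (by nlinarith)
  have hs0 : 0 < s := Real.sqrt_pos.mpr (by nlinarith)
  have hdps : dp ≤ d / s := by
    rw [le_div_iff₀ hs0]
    nlinarith [mul_nonneg hdp0 hs0.le]
  have htri : infDist xp Xs ≤ dp + ‖xp - p‖ := by
    rw [← dist_eq_norm]
    exact infDist_le_infDist_add_dist
  calc infDist xp Xs ≤ dp + ‖xp - p‖ := htri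
    _ ≤ d / s + δ := add_le_add hdps hxp
end

section
/- General variable-coefficient recurrence bound: let (u_k) satisfy u_{k+1} ≤ α_k u_k + β_k where α_k ∈ [0,1), (β_k) is nonnegative nonincreasing with Σ β_i ≤ Γ. Then u_k ≤ u_0 ∏_{j=0}^{k} α_j + Γ ∏_{j=⌈k/2⌉+1}^{k} α_j + max_{⌈k/2⌉+1 ≤ i ≤ k} β_i/(1-α_i) (interpreted for the (k+1)-st element as in the unrolled induction). -/
private lemma tele_aux (α : ℕ → ℝ) (m : ℕ) :
    ∀ k, m ≤ k + 1 →
      ∑ i ∈ Finset.Icc m k, (1 - α i) * ∏ j ∈ Finset.Icc (i + 1) k, α j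
        = 1 - ∏ j ∈ Finset.Icc m k, α j := by
  intro k
  induction k with
  | zero =>
    intro hm
    interval_cases m <;> simp
  | succ k ih =>
    intro hm
    rcases Nat.lt_or_ge m (k + 2) with h | h
    · have hm' : m ≤ k + 1 := Nat.lt_succ_iff.mp h
      rw [Finset.sum_Icc_succ_top hm', Finset.prod_Icc_succ_top hm']
      have hps : ∀ i ∈ Finset.Icc m k, (1 - α i) * ∏ j ∈ Finset.Icc (i + 1) (k + 1), α j
          = ((1 - α i) * ∏ j ∈ Finset.Icc (i + 1) k, α j) * α (k + 1) := by
        intro i hi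
        have : i + 1 ≤ k + 1 := by
          have := (Finset.mem_Icc.mp hi).2; omega
        rw [Finset.prod_Icc_succ_top this]; ring
      rw [Finset.sum_congr rfl hps, ← Finset.sum_mul]
      rcases Nat.lt_or_ge m (k + 1) with h2 | h2
      · rw [ih (by omega)]
        have : Finset.Icc (k + 2) (k + 1) = ∅ := by
          apply Finset.Icc_eq_empty; omega
        rw [this]; simp; ring
      · have hmk : m = k + 1 := by omega
        subst hmk
        have he : Finset.Icc (k + 1) k = ∅ := by apply Finset.Icc_eq_empty; omega
        have he2 : Finset.Icc (k + 2) (k + 1) = ∅ := by apply Finset.Icc_eq_empty; omega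
        rw [he, he2]; simp
    · have : Finset.Icc m (k + 1) = ∅ := by apply Finset.Icc_eq_empty; omega
      rw [this]; simp

private lemma unroll_aux (u β : ℕ → ℝ) (α : ℕ → ℝ)
    (hrec : ∀ k, u (k + 1) ≤ α k * u k + β k)
    (hα0 : ∀ k, 0 ≤ α k) :
    ∀ k, u (k + 1) ≤ u 0 * ∏ j ∈ Finset.range (k + 1), α j
      + ∑ i ∈ Finset.range (k + 1), β i * ∏ j ∈ Finset.Icc (i + 1) k, α j := by
  intro k
  induction k with
  | zero => simpa [mul_comm] using hrec 0
  | succ k ih =>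
    have h1 := hrec (k + 1)
    have h2 : α (k + 1) * u (k + 1) ≤ α (k + 1) *
        (u 0 * ∏ j ∈ Finset.range (k + 1), α j
          + ∑ i ∈ Finset.range (k + 1), β i * ∏ j ∈ Finset.Icc (i + 1) k, α j) :=
      mul_le_mul_of_nonneg_left ih (hα0 (k + 1))
    have key : α (k + 1) * (u 0 * ∏ j ∈ Finset.range (k + 1), α j
          + ∑ i ∈ Finset.range (k + 1), β i * ∏ j ∈ Finset.Icc (i + 1) k, α j) + β (k + 1)
        = u 0 * ∏ j ∈ Finset.range (k + 2), α j
          + ∑ i ∈ Finset.range (k + 2), β i * ∏ j ∈ Finset.Icc (i + 1) (k + 1), α j := by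
      rw [Finset.prod_range_succ (f := α) (n := k + 1), Finset.sum_range_succ (f := fun i =>
        β i * ∏ j ∈ Finset.Icc (i + 1) (k + 1), α j)]
      have he : Finset.Icc (k + 2) (k + 1) = ∅ := by apply Finset.Icc_eq_empty; omega
      rw [he, Finset.prod_empty, mul_one]
      have hps : ∀ i ∈ Finset.range (k + 1),
          β i * ∏ j ∈ Finset.Icc (i + 1) (k + 1), α j
            = α (k + 1) * (β i * ∏ j ∈ Finset.Icc (i + 1) k, α j) := by
        intro i hi
        have : i + 1 ≤ k + 1 := by
          have := Finset.mem_range.mp hi; omega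
        rw [Finset.prod_Icc_succ_top this]; ring
      rw [Finset.sum_congr rfl hps, ← Finset.mul_sum]
      ring
    calc u (k + 2) ≤ α (k + 1) * u (k + 1) + β (k + 1) := h1
      _ ≤ _ + β (k + 1) := by linarith
      _ = _ := key

theorem stmt_14 (u β : ℕ → ℝ) (α : ℕ → ℝ) (hu : ∀ k, 0 ≤ u k)
    (hα : ∀ k, 0 ≤ α k ∧ α k < 1) (hβ0 : ∀ k, 0 ≤ β k)
    (hβmono : ∀ i j, i ≤ j → β j ≤ β i) (Γ : ℝ)
    (hrec : ∀ k, u (k + 1) ≤ α k * u k + β k)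
    (hsum : ∀ N, ∑ i ∈ Finset.range N, β i ≤ Γ) :
    ∀ k : ℕ, u (k + 1)
      ≤ u 0 * ∏ j ∈ Finset.range (k + 1), α j
        + Γ * ∏ j ∈ Finset.Icc ((k + 1) / 2 + 1) k, α j
        + sSup ((fun i => β i / (1 - α i)) '' Set.Icc ((k + 1) / 2 + 1) k) := by
  intro k
  set m := (k + 1) / 2 + 1 with hm
  have hα0 : ∀ j, 0 ≤ α j := fun j => (hα j).1
  have hΓ0 : 0 ≤ Γ := le_trans (by simp) (hsum 0)
  have hprod_nonneg : ∀ (s : Finset ℕ), 0 ≤ ∏ j ∈ s, α j :=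
    fun s => Finset.prod_nonneg (fun j _ => hα0 j)
  have hprod_le_one : ∀ (s : Finset ℕ), ∏ j ∈ s, α j ≤ 1 :=
    fun s => Finset.prod_le_one (fun j _ => hα0 j) (fun j _ => (hα j).2.le)
  have hun := unroll_aux u β α hrec hα0 k
  by_cases hmk : m ≤ k
  · -- nonempty tail case
    set M := sSup ((fun i => β i / (1 - α i)) '' Set.Icc m k) with hM
    have hbdd : BddAbove ((fun i => β i / (1 - α i)) '' Set.Icc m k) :=
      ((Set.finite_Icc m k).image _).bddAbove
    have hMge : ∀ i, m ≤ i → i ≤ k → β i / (1 - α i) ≤ M := by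
      intro i h1 h2
      exact le_csSup hbdd ⟨i, Set.mem_Icc.mpr ⟨h1, h2⟩, rfl⟩
    have hM0 : 0 ≤ M := by
      refine le_trans ?_ (hMge m le_rfl hmk)
      exact div_nonneg (hβ0 m) (by linarith [(hα m).2])
    -- split the sum
    have hsplit : ∑ i ∈ Finset.range (k + 1), β i * ∏ j ∈ Finset.Icc (i + 1) k, α j
        = (∑ i ∈ Finset.range m, β i * ∏ j ∈ Finset.Icc (i + 1) k, α j)
          + ∑ i ∈ Finset.Icc m k, β i * ∏ j ∈ Finset.Icc (i + 1) k, α j := by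
      rw [Finset.range_eq_Ico, ← Finset.Ico_add_one_right_eq_Icc m k, ← Finset.range_eq_Ico]
      exact (Finset.sum_range_add_sum_Ico _ (by omega)).symm
    -- first part
    have hfirst : ∑ i ∈ Finset.range m, β i * ∏ j ∈ Finset.Icc (i + 1) k, α j
        ≤ Γ * ∏ j ∈ Finset.Icc m k, α j := by
      have hterm : ∀ i ∈ Finset.range m,
          β i * ∏ j ∈ Finset.Icc (i + 1) k, α j ≤ β i * ∏ j ∈ Finset.Icc m k, α j := by
        intro i hi
        have him : i + 1 ≤ m := Finset.mem_range.mp hi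
        have hsub : Finset.Icc m k ⊆ Finset.Icc (i + 1) k := by
          apply Finset.Icc_subset_Icc_left him
        have : ∏ j ∈ Finset.Icc (i + 1) k, α j ≤ ∏ j ∈ Finset.Icc m k, α j := by
          rw [← Finset.prod_sdiff hsub]
          calc (∏ j ∈ Finset.Icc (i+1) k \ Finset.Icc m k, α j) * ∏ j ∈ Finset.Icc m k, α j
              ≤ 1 * ∏ j ∈ Finset.Icc m k, α j := by
                apply mul_le_mul_of_nonneg_right (hprod_le_one _) (hprod_nonneg _)
            _ = _ := one_mul _
        exact mul_le_mul_of_nonneg_left this (hβ0 i)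
      calc ∑ i ∈ Finset.range m, β i * ∏ j ∈ Finset.Icc (i + 1) k, α j
          ≤ ∑ i ∈ Finset.range m, β i * ∏ j ∈ Finset.Icc m k, α j :=
            Finset.sum_le_sum hterm
        _ = (∑ i ∈ Finset.range m, β i) * ∏ j ∈ Finset.Icc m k, α j :=
            (Finset.sum_mul _ _ _).symm
        _ ≤ Γ * ∏ j ∈ Finset.Icc m k, α j :=
            mul_le_mul_of_nonneg_right (hsum m) (hprod_nonneg _)
    -- second part
    have hsecond : ∑ i ∈ Finset.Icc m k, β i * ∏ j ∈ Finset.Icc (i + 1) k, α j ≤ M := by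
      have hterm : ∀ i ∈ Finset.Icc m k,
          β i * ∏ j ∈ Finset.Icc (i + 1) k, α j
            ≤ M * ((1 - α i) * ∏ j ∈ Finset.Icc (i + 1) k, α j) := by
        intro i hi
        obtain ⟨h1, h2⟩ := Finset.mem_Icc.mp hi
        have hpos : 0 < 1 - α i := by linarith [(hα i).2]
        have hβle : β i ≤ M * (1 - α i) := by
          have := hMge i h1 h2
          calc β i = β i / (1 - α i) * (1 - α i) := by field_simp
            _ ≤ M * (1 - α i) := mul_le_mul_of_nonneg_right this hpos.le
        calc β i * ∏ j ∈ Finset.Icc (i + 1) k, α j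
            ≤ M * (1 - α i) * ∏ j ∈ Finset.Icc (i + 1) k, α j :=
              mul_le_mul_of_nonneg_right hβle (hprod_nonneg _)
          _ = M * ((1 - α i) * ∏ j ∈ Finset.Icc (i + 1) k, α j) := by ring
      calc ∑ i ∈ Finset.Icc m k, β i * ∏ j ∈ Finset.Icc (i + 1) k, α j
          ≤ ∑ i ∈ Finset.Icc m k, M * ((1 - α i) * ∏ j ∈ Finset.Icc (i + 1) k, α j) :=
            Finset.sum_le_sum hterm
        _ = M * ∑ i ∈ Finset.Icc m k, (1 - α i) * ∏ j ∈ Finset.Icc (i + 1) k, α j :=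
            (Finset.mul_sum _ _ _).symm
        _ = M * (1 - ∏ j ∈ Finset.Icc m k, α j) := by
            rw [tele_aux α m k (by omega)]
        _ ≤ M * 1 := by
            apply mul_le_mul_of_nonneg_left _ hM0
            linarith [hprod_nonneg (Finset.Icc m k)]
        _ = M := mul_one M
    linarith
  · -- empty tail: m > k
    have hempty : Set.Icc m k = ∅ := Set.Icc_eq_empty (by omega)
    have hfempty : Finset.Icc m k = ∅ := by apply Finset.Icc_eq_empty; omega
    rw [hempty, Set.image_empty, Real.sSup_empty, hfempty, Finset.prod_empty, mul_one]
    have hsumle : ∑ i ∈ Finset.range (k + 1), β i * ∏ j ∈ Finset.Icc (i + 1) k, α j ≤ Γ := by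
      calc ∑ i ∈ Finset.range (k + 1), β i * ∏ j ∈ Finset.Icc (i + 1) k, α j
          ≤ ∑ i ∈ Finset.range (k + 1), β i * 1 := by
            apply Finset.sum_le_sum
            intro i _
            exact mul_le_mul_of_nonneg_left (hprod_le_one _) (hβ0 i)
        _ = ∑ i ∈ Finset.range (k + 1), β i := by simp
        _ ≤ Γ := hsum (k + 1)
    linarith
end

section
/- Finite-then-linear convergence of the recurrence r_{k+1} = max{ r_k - α, β r_k }: let α > 0, β ∈ (0,1), and r_0 ≥ 0 with r_{k+1} = max{ r_k - α, β r_k }. While r_k ≥ α/(1-β) the sequence decreases by at least α per step (so at most ⌈r_0/α - 1/(1-β)⌉ such steps), and once r_{k₀} ≤ α/(1-β) it satisfies r_{k₀+j} ≤ β^j · α/(1-β). Consequently r_k ≤ ε after at most ⌈r_0/α⌉ + ⌈(1/(1-β)) log( α/((1-β)ε) )⌉ iterations for any ε > 0. -/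
theorem stmt_16 (α β : ℝ) (hα : 0 < α) (hβ0 : 0 < β) (hβ1 : β < 1)
    (r : ℕ → ℝ) (hr0 : 0 ≤ r 0)
    (hrec : ∀ k, r (k + 1) = max (r k - α) (β * r k)) :
    (∀ k, α / (1 - β) ≤ r k → r (k + 1) ≤ r k - α) ∧
    (∀ k₀ j, r k₀ ≤ α / (1 - β) → r (k₀ + j) ≤ β ^ j * (α / (1 - β))) ∧
    (∀ ε : ℝ, 0 < ε → ∀ k : ℕ,
      ⌈r 0 / α⌉₊ + ⌈(1 / (1 - β)) * Real.log (α / ((1 - β) * ε))⌉₊ ≤ k → r k ≤ ε) := by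
  have h1β : 0 < 1 - β := by linarith
  have hT : 0 < α / (1 - β) := div_pos hα h1β
  have hpos : ∀ k, 0 ≤ r k := by
    intro k
    induction k with
    | zero => exact hr0
    | succ n ih =>
      rw [hrec]
      exact le_trans (by positivity) (le_max_right _ _)
  have hmono : ∀ k, r (k + 1) ≤ r k := by
    intro k
    rw [hrec]
    apply max_le (by linarith)
    nlinarith [hpos k]
  have hanti : ∀ i j : ℕ, i ≤ j → r j ≤ r i := by
    intro i j hij
    induction j with
    | zero => simp_all
    | succ n ih =>
      rcases Nat.lt_or_ge i (n + 1) with h | h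
      · exact le_trans (hmono n) (ih (Nat.lt_succ_iff.mp h))
      · have : i = n + 1 := le_antisymm hij h
        simp [this]
  have part1 : ∀ k, α / (1 - β) ≤ r k → r (k + 1) ≤ r k - α := by
    intro k hk
    rw [hrec]
    apply max_le le_rfl
    have := (div_le_iff₀ h1β).mp hk
    nlinarith
  have part2 : ∀ k₀ j, r k₀ ≤ α / (1 - β) → r (k₀ + j) ≤ β ^ j * (α / (1 - β)) := by
    intro k₀ j h
    induction j with
    | zero => simpa using h
    | succ n ih =>
      rw [show k₀ + (n + 1) = (k₀ + n) + 1 by ring, hrec]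
      have hβn : β ^ n ≤ 1 := pow_le_one₀ hβ0.le hβ1.le
      have hTa : (1 - β) * (α / (1 - β)) = α := mul_div_cancel₀ α h1β.ne'
      have h6 : β ^ n * ((1 - β) * (α / (1 - β))) = β ^ n * α := by rw [hTa]
      have h7 : β ^ n * α ≤ α := mul_le_of_le_one_left hα.le hβn
      apply max_le
      · rw [pow_succ]
        nlinarith
      · rw [pow_succ]
        nlinarith [hpos (k₀ + n)]
  refine ⟨part1, part2, ?_⟩
  intro ε hε k hk
  set K1 := ⌈r 0 / α⌉₊ with hK1
  set K2 := ⌈(1 / (1 - β)) * Real.log (α / ((1 - β) * ε))⌉₊ with hK2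
  -- Step 1: r K1 ≤ threshold
  have hstep : ∀ n : ℕ, (∀ i < n, α / (1 - β) ≤ r i) → r n ≤ r 0 - n * α := by
    intro n
    induction n with
    | zero => simp
    | succ m ih =>
      intro h
      have h1 := part1 m (h m (Nat.lt_succ_self m))
      have h2 := ih fun i hi => h i (Nat.lt_succ_of_lt hi)
      push_cast
      linarith
  have hK1T : r K1 ≤ α / (1 - β) := by
    by_contra hcon
    push_neg at hcon
    have hall : ∀ i < K1, α / (1 - β) ≤ r i := fun i hi =>
      le_trans hcon.le (hanti i K1 hi.le)
    have h1 := hstep K1 hall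
    have h2 : r 0 / α ≤ (K1 : ℝ) := Nat.le_ceil _
    have h3 : r 0 ≤ K1 * α := by
      rw [div_le_iff₀ hα] at h2
      linarith
    linarith
  -- Step 2: geometric decay
  have hjk : K2 ≤ k - K1 := by omega
  have hsplit : k = K1 + (k - K1) := by omega
  have hge : r k ≤ β ^ (k - K1) * (α / (1 - β)) := by
    have := part2 K1 (k - K1) hK1T
    rwa [← hsplit] at this
  have hpowle : β ^ (k - K1) ≤ β ^ K2 :=
    pow_le_pow_of_le_one hβ0.le hβ1.le hjk
  have hfin : β ^ K2 * (α / (1 - β)) ≤ ε := by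
    rcases le_or_gt (α / (1 - β)) ε with hTe | hTe
    · calc β ^ K2 * (α / (1 - β)) ≤ 1 * (α / (1 - β)) := by
            have := pow_le_one₀ hβ0.le hβ1.le (n := K2)
            nlinarith
        _ ≤ ε := by linarith
    · have hTd : α / ((1 - β) * ε) = (α / (1 - β)) / ε := by
        field_simp
      have hL : 0 < Real.log (α / ((1 - β) * ε)) := by
        rw [hTd]
        apply Real.log_pos
        rw [lt_div_iff₀ hε]
        linarith
      set L := Real.log (α / ((1 - β) * ε)) with hLdef
      have hK2L : (1 / (1 - β)) * L ≤ (K2 : ℝ) := Nat.le_ceil _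
      have hlogβ : Real.log β ≤ β - 1 := Real.log_le_sub_one_of_pos hβ0
      have hexp : β ^ K2 = Real.exp (K2 * Real.log β) := by
        rw [← Real.exp_log hβ0, ← Real.exp_nat_mul]
        rw [Real.log_exp]
      have harg : (K2 : ℝ) * Real.log β ≤ -L := by
        have hK2nn : (0:ℝ) ≤ K2 := Nat.cast_nonneg _
        have h1 : (K2 : ℝ) * Real.log β ≤ K2 * (β - 1) :=
          mul_le_mul_of_nonneg_left hlogβ hK2nn
        have hinv : (1 / (1 - β)) * (1 - β) = 1 := by field_simp
        have h2 : L ≤ K2 * (1 - β) := by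
          nlinarith [mul_le_mul_of_nonneg_right hK2L h1β.le, hL]
        linarith
      have h3 : β ^ K2 ≤ Real.exp (-L) := by
        rw [hexp]; exact Real.exp_le_exp.mpr harg
      have h4 : Real.exp L = (α / (1 - β)) / ε := by
        rw [hLdef, hTd, Real.exp_log (div_pos hT hε)]
      have h5 : Real.exp (-L) = ε / (α / (1 - β)) := by
        rw [Real.exp_neg, h4, inv_div]
      rw [h5] at h3
      calc β ^ K2 * (α / (1 - β)) ≤ (ε / (α / (1 - β))) * (α / (1 - β)) :=
            mul_le_mul_of_nonneg_right h3 hT.le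
        _ = ε := div_mul_cancel₀ _ hT.ne'
  calc r k ≤ β ^ (k - K1) * (α / (1 - β)) := hge
    _ ≤ β ^ K2 * (α / (1 - β)) := mul_le_mul_of_nonneg_right hpowle hT.le
    _ ≤ ε := hfin
end

section
/- Polyak-type recurrence decay for superlinear exponent: let α > 0, ρ > 1 and define g(r) = r - α r^ρ. Then for any r > 0 with g iterated k times staying nonnegative, g^{(k)}(r) ≤ r / (1 + (ρ-1) r^{ρ-1} k α)^{1/(ρ-1)} ≤ ( 1 / ( r^{-(ρ-1)} + (ρ-1) k α ) )^{1/(ρ-1)}. -/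
noncomputable def gfun (α ρ r : ℝ) : ℝ := r - α * r ^ ρ

open Real

lemma bernoulli_aux (q s : ℝ) (hq : 0 ≤ q) (hs0 : 0 ≤ s) (hs1 : s < 1) :
    1 + q * s ≤ (1 - s) ^ (-q) := by
  have h1 : (0:ℝ) < 1 - s := by linarith
  rw [Real.rpow_def_of_pos h1]
  have hlog : Real.log (1 - s) ≤ -s := by
    have := Real.log_le_sub_one_of_pos h1
    linarith
  have h2 : 1 + q * s ≤ 1 + (-q * Real.log (1 - s)) := by nlinarith
  have h3 := Real.add_one_le_exp (-q * Real.log (1 - s))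
  rw [mul_comm (Real.log (1 - s)) (-q)]
  linarith

lemma key_step (α ρ : ℝ) (hα : 0 < α) (hρ : 1 < ρ) (x : ℝ) (hx : 0 < x)
    (hg : 0 < gfun α ρ x) :
    x ^ (-(ρ - 1)) + (ρ - 1) * α ≤ (gfun α ρ x) ^ (-(ρ - 1)) := by
  set q := ρ - 1 with hqdef
  have hq : 0 < q := by simp [hqdef]; linarith
  set s := α * x ^ q with hsdef
  have hs0 : 0 < s := mul_pos hα (Real.rpow_pos_of_pos hx q)
  have hxρ : x ^ ρ = x * x ^ q := by
    rw [show ρ = 1 + q by ring, Real.rpow_add hx, Real.rpow_one]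
  have hgx : gfun α ρ x = x * (1 - s) := by
    simp only [gfun, hxρ, hsdef]; ring
  have hs1 : s < 1 := by
    by_contra h
    push_neg at h
    have : gfun α ρ x ≤ 0 := by
      rw [hgx]
      exact mul_nonpos_of_nonneg_of_nonpos hx.le (by linarith)
    linarith
  have h1s : (0:ℝ) ≤ 1 - s := by linarith
  have hmul : (gfun α ρ x) ^ (-q) = x ^ (-q) * (1 - s) ^ (-q) := by
    rw [hgx, Real.mul_rpow hx.le h1s]
  have hbern := bernoulli_aux q s hq.le hs0.le hs1
  have hxq : x ^ (-q) * x ^ q = 1 := by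
    rw [← Real.rpow_add hx]; simp
  have hxqpos : 0 < x ^ (-q) := Real.rpow_pos_of_pos hx _
  have : x ^ (-q) * (1 + q * s) ≤ x ^ (-q) * (1 - s) ^ (-q) :=
    mul_le_mul_of_nonneg_left hbern hxqpos.le
  have hexp : x ^ (-q) * (1 + q * s) = x ^ (-q) + q * α := by
    rw [hsdef]; linear_combination q * α * hxq
  rw [hexp] at this
  rw [hmul]
  linarith

lemma invariant (α ρ : ℝ) (hα : 0 < α) (hρ : 1 < ρ) (r : ℝ) (hr : 0 < r) :
    ∀ k : ℕ, (∀ j ≤ k, 0 ≤ (gfun α ρ)^[j] r) →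
      (gfun α ρ)^[k] r = 0 ∨
      (0 < (gfun α ρ)^[k] r ∧
        r ^ (-(ρ - 1)) + (ρ - 1) * k * α ≤ ((gfun α ρ)^[k] r) ^ (-(ρ - 1))) := by
  intro k
  induction k with
  | zero =>
    intro _
    right
    refine ⟨hr, ?_⟩
    simp
  | succ n ih =>
    intro h
    have hIH := ih (fun j hj => h j (le_trans hj (Nat.le_succ n)))
    rw [Function.iterate_succ_apply']
    set y := (gfun α ρ)^[n] r with hy
    rcases hIH with h0 | ⟨hypos, hbound⟩
    · left
      rw [h0]
      simp [gfun, Real.zero_rpow (by linarith : ρ ≠ 0)]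
    · have hnext : 0 ≤ gfun α ρ y := by
        have := h (n+1) le_rfl
        rwa [Function.iterate_succ_apply'] at this
      rcases eq_or_lt_of_le hnext with heq | hpos
      · left; exact heq.symm
      · right
        refine ⟨hpos, ?_⟩
        have hkey := key_step α ρ hα hρ y hypos hpos
        push_cast
        linarith

theorem stmt_17 (α ρ : ℝ) (hα : 0 < α) (hρ : 1 < ρ) (k : ℕ) (r : ℝ) (hr : 0 < r)
    (hreg : r ≤ (1 / (α * ρ)) ^ (1 / (ρ - 1)))
    (hnonneg : ∀ j ≤ k, 0 ≤ (gfun α ρ)^[j] r) :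
    (gfun α ρ)^[k] r ≤ r / (1 + (ρ - 1) * r ^ (ρ - 1) * (k : ℝ) * α) ^ (1 / (ρ - 1)) ∧
    r / (1 + (ρ - 1) * r ^ (ρ - 1) * (k : ℝ) * α) ^ (1 / (ρ - 1))
      ≤ (1 / (r ^ (-(ρ - 1)) + (ρ - 1) * (k : ℝ) * α)) ^ (1 / (ρ - 1)) := by
  have hq : 0 < ρ - 1 := by linarith
  set q := ρ - 1 with hqdef
  set A := q * r ^ q * (k : ℝ) * α with hA
  set B := r ^ (-q) + q * (k : ℝ) * α with hB
  have hrq : r ^ (-q) * r ^ q = 1 := by rw [← Real.rpow_add hr]; simp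
  have hrqpos : 0 < r ^ (-q) := Real.rpow_pos_of_pos hr _
  have hrqpos' : 0 < r ^ q := Real.rpow_pos_of_pos hr _
  have hApos : 0 ≤ A := by
    have : (0:ℝ) ≤ (k:ℝ) := Nat.cast_nonneg k
    positivity
  have hBpos : 0 < B := by
    have : (0:ℝ) ≤ (k:ℝ) := Nat.cast_nonneg k
    have : 0 ≤ q * (k : ℝ) * α := by positivity
    rw [hB]; linarith
  have hEq1 : B = r ^ (-q) * (1 + A) := by
    rw [hB, hA]; nlinarith [hrq]
  have h1A : (0:ℝ) < 1 + A := by linarith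
  -- B^(-(1/q)) = r / (1+A)^(1/q)
  have hEq2 : B ^ (-(1/q)) = r / (1 + A) ^ (1/q) := by
    rw [hEq1, Real.mul_rpow hrqpos.le h1A.le, ← Real.rpow_mul hr.le,
      (show (-q) * (-(1/q)) = 1 by field_simp), Real.rpow_one, Real.rpow_neg h1A.le]
    ring
  have hEq3 : (1 / B) ^ (1/q) = B ^ (-(1/q)) := by
    rw [one_div, Real.inv_rpow hBpos.le, ← Real.rpow_neg hBpos.le]
  constructor
  · rw [← hEq2]
    rcases invariant α ρ hα hρ r hr k hnonneg with h0 | ⟨hypos, hbound⟩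
    · rw [h0]
      exact (Real.rpow_pos_of_pos hBpos _).le
    · set y := (gfun α ρ)^[k] r
      have hle : B ≤ y ^ (-q) := hbound
      have hmono : (y ^ (-q)) ^ (-(1/q)) ≤ B ^ (-(1/q)) :=
        Real.rpow_le_rpow_of_nonpos hBpos hle (neg_nonpos.mpr (by positivity : (0:ℝ) ≤ 1/q))
      have hyy : (y ^ (-q)) ^ (-(1/q)) = y := by
        rw [← Real.rpow_mul hypos.le]
        have : (-q) * (-(1/q)) = 1 := by field_simp
        rw [this, Real.rpow_one]
      rwa [hyy] at hmono
  · rw [hEq3, hEq2]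
end

section
/- Linear convergence of the proximal-regularized gradient fixed-point iteration: let f have ν-Hölder continuous gradients with constant L (ν ∈ [0,1]), μ > 0, ψ convex lsc proper, x fixed, and let z(x) = prox_μ^F(x) be the minimizer of F(z) + ‖z-x‖²/(2μ) with F = f + ψ. Define the iteration z⁺ = prox_α^ψ( z - α( f'(z) + (z-x)/μ ) ). Then ‖z⁺ - z(x)‖² ≤ (1 - α/μ)² ‖z - z(x)‖² + α² L² ‖z - z(x)‖^{2ν} for all z, provided α < μ. Moreover if α ≤ min{ μ/2, δ^{2(1-ν)}/(4μL²) } and ‖z - z(x)‖ ≥ δ, then ‖z⁺ - z(x)‖² ≤ (1 - α/(2μ)) ‖z - z(x)‖². -/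
open Metric Set

open Metric Set
local notation "⟪" x ", " y "⟫" => @inner ℝ _ _ x y

private lemma aux_deriv_nonneg' {g : ℝ → ℝ} {c : ℝ} (hg : HasDerivAt g c 0) (h0 : g 0 = 0)
    (h : ∀ t : ℝ, 0 < t → t ≤ 1 → 0 ≤ g t) : 0 ≤ c := by
  have hs := hasDerivAt_iff_tendsto_slope.mp hg
  have hs' : Filter.Tendsto (slope g 0) (nhdsWithin 0 (Set.Ioi 0)) (nhds c) :=
    hs.mono_left (nhdsWithin_mono _ (fun t ht => ne_of_gt ht))
  refine ge_of_tendsto hs' ?_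
  filter_upwards [Ioc_mem_nhdsGT (by norm_num : (0:ℝ) < 1)] with t ht
  have h1 := h t ht.1 ht.2
  rw [slope_def_field, div_eq_mul_inv, h0, sub_zero, sub_zero]
  exact mul_nonneg h1 (inv_nonneg.2 ht.1.le)

private lemma aux_line_deriv' {n : ℕ} (f : EuclideanSpace ℝ (Fin n) → ℝ)
    (f' : EuclideanSpace ℝ (Fin n) → EuclideanSpace ℝ (Fin n))
    (hgrad : ∀ w, HasGradientAt f (f' w) w) (v d : EuclideanSpace ℝ (Fin n)) :
    HasDerivAt (fun t : ℝ => f (v + t • d)) ⟪f' v, d⟫ 0 := by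
  have hline : HasDerivAt (fun t : ℝ => v + t • d) d 0 := by
    simpa using ((hasDerivAt_id (0:ℝ)).smul_const d).const_add v
  have h2 : HasFDerivAt f (InnerProductSpace.toDual ℝ _ (f' v)) (v + (0:ℝ) • d) := by
    simpa using (hgrad v).hasFDerivAt
  exact h2.comp_hasDerivAt 0 hline

private lemma aux_grad_ineq' {n : ℕ} (f : EuclideanSpace ℝ (Fin n) → ℝ)
    (f' : EuclideanSpace ℝ (Fin n) → EuclideanSpace ℝ (Fin n))
    (hf : ConvexOn ℝ Set.univ f) (hgrad : ∀ w, HasGradientAt f (f' w) w)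
    (v u : EuclideanSpace ℝ (Fin n)) :
    f v + ⟪f' v, u - v⟫ ≤ f u := by
  have key : 0 ≤ (-(f v) + f u) - ⟪f' v, u - v⟫ := by
    apply aux_deriv_nonneg' (g := fun t : ℝ => ((1 - t) * f v + t * f u) - f (v + t • (u - v)))
    · have h1 : HasDerivAt (fun t : ℝ => (1 - t) * f v + t * f u) (-(f v) + f u) 0 := by
        have := (((hasDerivAt_id (0:ℝ)).const_sub 1).mul_const (f v)).add
          ((hasDerivAt_id (0:ℝ)).mul_const (f u))
        simp at this; exact this
      exact h1.sub (aux_line_deriv' f f' hgrad v (u - v))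
    · simp
    · intro t ht0 ht1
      have hc := hf.2 (Set.mem_univ v) (Set.mem_univ u) (by linarith : (0:ℝ) ≤ 1 - t)
        ht0.le (by ring)
      have he : (1 - t) • v + t • u = v + t • (u - v) := by module
      rw [he] at hc
      simp only [smul_eq_mul] at hc
      linarith
  linarith
private lemma aux_prox_vi {n : ℕ} (ψ : EuclideanSpace ℝ (Fin n) → ℝ)
    (hψ : ConvexOn ℝ Set.univ ψ) (α : ℝ) (hα : 0 < α)
    (P : EuclideanSpace ℝ (Fin n) → EuclideanSpace ℝ (Fin n))
    (hP : ∀ w z, ψ (P w) + ‖P w - w‖ ^ 2 / (2 * α) ≤ ψ z + ‖z - w‖ ^ 2 / (2 * α))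
    (w u : EuclideanSpace ℝ (Fin n)) :
    α⁻¹ * ⟪w - P w, u - P w⟫ ≤ ψ u - ψ (P w) := by
  obtain ⟨p, hp⟩ : ∃ p, P w = p := ⟨P w, rfl⟩
  simp only [hp] at hP ⊢
  have key : 0 ≤ ψ u - ψ p - α⁻¹ * ⟪w - p, u - p⟫ := by
    apply aux_deriv_nonneg'
      (g := fun t : ℝ => (ψ u - ψ p - α⁻¹ * ⟪w - p, u - p⟫) * t + (‖u - p‖ ^ 2 / (2 * α)) * t ^ 2)
    · have := ((hasDerivAt_id (0:ℝ)).const_mul (ψ u - ψ p - α⁻¹ * ⟪w - p, u - p⟫)).add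
        ((hasDerivAt_pow 2 (0:ℝ)).const_mul (‖u - p‖ ^ 2 / (2 * α)))
      simp at this; exact this
    · simp
    · intro t ht0 ht1
      have hc := hψ.2 (Set.mem_univ p) (Set.mem_univ u) (by linarith : (0:ℝ) ≤ 1 - t)
        ht0.le (by ring)
      have he : (1 - t) • p + t • u = p + t • (u - p) := by module
      rw [he] at hc
      simp only [smul_eq_mul] at hc
      have hnorm : ‖p + t • (u - p) - w‖ ^ 2
          = ‖p - w‖ ^ 2 + 2 * (t * ⟪p - w, u - p⟫) + t ^ 2 * ‖u - p‖ ^ 2 := by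
        have he2 : p + t • (u - p) - w = (p - w) + t • (u - p) := by module
        rw [he2, norm_add_sq_real, real_inner_smul_right, norm_smul, Real.norm_eq_abs,
          mul_pow, sq_abs]
      have h3 := hP w (p + t • (u - p))
      rw [hp] at h3
      rw [hnorm] at h3
      have hI : ⟪p - w, u - p⟫ = -⟪w - p, u - p⟫ := by
        rw [show p - w = -(w - p) by abel, inner_neg_left]
      rw [hI] at h3
      have heq : (ψ u - ψ p - α⁻¹ * ⟪w - p, u - p⟫) * t + (‖u - p‖ ^ 2 / (2 * α)) * t ^ 2
          = t * (ψ u) + (‖p - w‖ ^ 2 + 2 * (t * -⟪w - p, u - p⟫) + t ^ 2 * ‖u - p‖ ^ 2) / (2 * α)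
            - t * ψ p - ‖p - w‖ ^ 2 / (2 * α) := by
        field_simp; ring
      rw [heq]
      linarith [h3, hc]
  linarith [key]

private lemma aux_sq_le {a b c : ℝ} (hb : 0 ≤ b) (h1 : a ^ 2 ≤ c) (h2 : c ≤ b * a) : a ≤ b := by
  by_cases h : a ≤ b
  · exact h
  · push_neg at h
    have ha : 0 < a := lt_of_le_of_lt hb h
    nlinarith

set_option maxHeartbeats 800000 in
theorem stmt_19 {n : ℕ}
    (f ψ : EuclideanSpace ℝ (Fin n) → ℝ)
    (f' : EuclideanSpace ℝ (Fin n) → EuclideanSpace ℝ (Fin n))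
    (hf : ConvexOn ℝ Set.univ f) (hgrad : ∀ w, HasGradientAt f (f' w) w)
    (ν L : ℝ) (hν0 : 0 ≤ ν) (hν1 : ν ≤ 1) (hL : 0 < L)
    (hHolder : ∀ w v, ‖f' w - f' v‖ ≤ L * ‖w - v‖ ^ ν)
    (hψ : ConvexOn ℝ Set.univ ψ) (hψlsc : LowerSemicontinuous ψ)
    (μ α : ℝ) (hμ : 0 < μ) (hαpos : 0 < α)
    (x zx : EuclideanSpace ℝ (Fin n))
    (hzx : ∀ z, f zx + ψ zx + ‖zx - x‖ ^ 2 / (2 * μ)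
        ≤ f z + ψ z + ‖z - x‖ ^ 2 / (2 * μ))
    (P : EuclideanSpace ℝ (Fin n) → EuclideanSpace ℝ (Fin n))
    (hP : ∀ w z, ψ (P w) + ‖P w - w‖ ^ 2 / (2 * α) ≤ ψ z + ‖z - w‖ ^ 2 / (2 * α)) :
    (α < μ → ∀ z, ‖P (z - α • (f' z + μ⁻¹ • (z - x))) - zx‖ ^ 2
        ≤ (1 - α / μ) ^ 2 * ‖z - zx‖ ^ 2 + α ^ 2 * L ^ 2 * ‖z - zx‖ ^ (2 * ν)) ∧
    (∀ δ : ℝ, 0 ≤ δ →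
      α ≤ min (μ / 2) (δ ^ (2 * (1 - ν)) / (4 * μ * L ^ 2)) →
      ∀ z, δ ≤ ‖z - zx‖ →
        ‖P (z - α • (f' z + μ⁻¹ • (z - x))) - zx‖ ^ 2
          ≤ (1 - α / (2 * μ)) * ‖z - zx‖ ^ 2) := by
  -- variational inequality at the proximal point zx
  have hVI : ∀ u, 0 ≤ ⟪f' zx, u - zx⟫ + ((ψ u - ψ zx) + μ⁻¹ * ⟪zx - x, u - zx⟫) := by
    intro u
    apply aux_deriv_nonneg' (g := fun t : ℝ => (f (zx + t • (u - zx)) - f zx)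
      + ((ψ u - ψ zx) + μ⁻¹ * ⟪zx - x, u - zx⟫) * t + (‖u - zx‖ ^ 2 / (2 * μ)) * t ^ 2)
    · have h1 := (aux_line_deriv' f f' hgrad zx (u - zx)).sub_const (f zx)
      have h2 := (hasDerivAt_id (0:ℝ)).const_mul ((ψ u - ψ zx) + μ⁻¹ * ⟪zx - x, u - zx⟫)
      have h3 := (hasDerivAt_pow 2 (0:ℝ)).const_mul (‖u - zx‖ ^ 2 / (2 * μ))
      have := (h1.add h2).add h3
      simp at this; exact this
    · simp
    · intro t ht0 ht1
      have hc := hψ.2 (Set.mem_univ zx) (Set.mem_univ u) (by linarith : (0:ℝ) ≤ 1 - t)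
        ht0.le (by ring)
      have he : (1 - t) • zx + t • u = zx + t • (u - zx) := by module
      rw [he] at hc
      simp only [smul_eq_mul] at hc
      have hnorm : ‖zx + t • (u - zx) - x‖ ^ 2
          = ‖zx - x‖ ^ 2 + 2 * (t * ⟪zx - x, u - zx⟫) + t ^ 2 * ‖u - zx‖ ^ 2 := by
        have he2 : zx + t • (u - zx) - x = (zx - x) + t • (u - zx) := by module
        rw [he2, norm_add_sq_real, real_inner_smul_right, norm_smul, Real.norm_eq_abs,
          mul_pow, sq_abs]
      have h3 := hzx (zx + t • (u - zx))
      rw [hnorm] at h3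
      have hdiv : (‖zx - x‖ ^ 2 + 2 * (t * ⟪zx - x, u - zx⟫) + t ^ 2 * ‖u - zx‖ ^ 2) / (2 * μ)
          = ‖zx - x‖ ^ 2 / (2 * μ) + t * (μ⁻¹ * ⟪zx - x, u - zx⟫)
            + t ^ 2 * (‖u - zx‖ ^ 2 / (2 * μ)) := by
        field_simp
      rw [hdiv] at h3
      nlinarith [h3, hc]
  -- firm nonexpansiveness style bound
  have key : ∀ z, ‖P (z - α • (f' z + μ⁻¹ • (z - x))) - zx‖
      ≤ ‖(1 - α / μ) • (z - zx) - α • (f' z - f' zx)‖ := by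
    intro z
    obtain ⟨w, hw⟩ : ∃ w, z - α • (f' z + μ⁻¹ • (z - x)) = w := ⟨_, rfl⟩
    rw [hw]
    obtain ⟨p, hpp⟩ : ∃ p, P w = p := ⟨_, rfl⟩
    rw [hpp]
    have h1 := aux_prox_vi ψ hψ α hαpos P hP w zx
    rw [hpp] at h1
    have h2 := hVI p
    have hwp : w - p = ((1 - α / μ) • (z - zx) - α • (f' z - f' zx)) - (p - zx)
        - α • (f' zx) - (α / μ) • (zx - x) := by
      rw [← hw]; module
    have hinner : ⟪w - p, p - zx⟫
        = ⟪(1 - α / μ) • (z - zx) - α • (f' z - f' zx), p - zx⟫ - ⟪p - zx, p - zx⟫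
          - α * ⟪f' zx, p - zx⟫ - (α / μ) * ⟪zx - x, p - zx⟫ := by
      rw [hwp, inner_sub_left, inner_sub_left, inner_sub_left, real_inner_smul_left,
        real_inner_smul_left]
    have hqn : ⟪p - zx, p - zx⟫ = ‖p - zx‖ ^ 2 := real_inner_self_eq_norm_sq _
    rw [show zx - p = -(p - zx) by abel, inner_neg_right] at h1
    have h4 := mul_le_mul_of_nonneg_left (h1.trans (by linarith [h2] :
      ψ zx - ψ p ≤ ⟪f' zx, p - zx⟫ + μ⁻¹ * ⟪zx - x, p - zx⟫)) hαpos.le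
    rw [show α * (α⁻¹ * -⟪w - p, p - zx⟫) = -(α * α⁻¹) * ⟪w - p, p - zx⟫ by ring,
      mul_inv_cancel₀ hαpos.ne'] at h4
    have hbr : α * (⟪f' zx, p - zx⟫ + μ⁻¹ * ⟪zx - x, p - zx⟫)
        = α * ⟪f' zx, p - zx⟫ + α / μ * ⟪zx - x, p - zx⟫ := by ring
    have hfirm : ‖p - zx‖ ^ 2 ≤ ⟪(1 - α / μ) • (z - zx) - α • (f' z - f' zx), p - zx⟫ := by
      linarith [h4, hinner, hqn, hbr]
    have hcs := real_inner_le_norm ((1 - α / μ) • (z - zx) - α • (f' z - f' zx)) (p - zx)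
    exact aux_sq_le (norm_nonneg _) hfirm hcs
  have part1 : α < μ → ∀ z, ‖P (z - α • (f' z + μ⁻¹ • (z - x))) - zx‖ ^ 2
      ≤ (1 - α / μ) ^ 2 * ‖z - zx‖ ^ 2 + α ^ 2 * L ^ 2 * ‖z - zx‖ ^ (2 * ν) := by
    intro hαμ z
    have hk2 : ‖P (z - α • (f' z + μ⁻¹ • (z - x))) - zx‖ ^ 2
        ≤ ‖(1 - α / μ) • (z - zx) - α • (f' z - f' zx)‖ ^ 2 :=
      pow_le_pow_left₀ (norm_nonneg _) (key z) 2
    have hv2 : ‖(1 - α / μ) • (z - zx) - α • (f' z - f' zx)‖ ^ 2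
        = (1 - α / μ) ^ 2 * ‖z - zx‖ ^ 2
          - 2 * ((1 - α / μ) * (α * ⟪z - zx, f' z - f' zx⟫))
          + α ^ 2 * ‖f' z - f' zx‖ ^ 2 := by
      rw [norm_sub_sq_real, real_inner_smul_left, real_inner_smul_right, norm_smul, norm_smul,
        Real.norm_eq_abs, Real.norm_eq_abs, mul_pow, mul_pow, sq_abs, sq_abs]
    rw [hv2] at hk2
    have hmono : 0 ≤ ⟪z - zx, f' z - f' zx⟫ := by
      have g1 := aux_grad_ineq' f f' hf hgrad z zx
      have g2 := aux_grad_ineq' f f' hf hgrad zx z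
      rw [show zx - z = -(z - zx) by abel, inner_neg_right] at g1
      rw [show (⟪z - zx, f' z - f' zx⟫ : ℝ) = ⟪f' z, z - zx⟫ - ⟪f' zx, z - zx⟫ by
        rw [real_inner_comm, inner_sub_left]]
      linarith
    have hb2 : ‖f' z - f' zx‖ ^ 2 ≤ L ^ 2 * ‖z - zx‖ ^ (2 * ν) := by
      have h5 : ‖f' z - f' zx‖ ^ 2 ≤ (L * ‖z - zx‖ ^ ν) ^ 2 :=
        pow_le_pow_left₀ (norm_nonneg _) (hHolder z zx) 2
      have h6 : (‖z - zx‖ ^ ν) ^ (2 : ℕ) = ‖z - zx‖ ^ (2 * ν) := by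
        rw [← Real.rpow_natCast (‖z - zx‖ ^ ν) 2, ← Real.rpow_mul (norm_nonneg _)]
        norm_num [mul_comm]
      rw [mul_pow, h6] at h5
      exact h5
    have hs : 0 ≤ 1 - α / μ := by
      rw [sub_nonneg]; exact (div_le_one hμ).mpr hαμ.le
    have hcross : 0 ≤ (1 - α / μ) * (α * ⟪z - zx, f' z - f' zx⟫) :=
      mul_nonneg hs (mul_nonneg hαpos.le hmono)
    have hbb : α ^ 2 * ‖f' z - f' zx‖ ^ 2 ≤ α ^ 2 * (L ^ 2 * ‖z - zx‖ ^ (2 * ν)) :=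
      mul_le_mul_of_nonneg_left hb2 (sq_nonneg α)
    linarith [hk2, hcross, hbb]
  refine ⟨part1, ?_⟩
  intro δ hδ hα2 z hz
  have hαμ2 := (le_min_iff.mp hα2).1
  have hα4 := (le_min_iff.mp hα2).2
  have hlt : α < μ := lt_of_le_of_lt hαμ2 (by linarith)
  have h1 := part1 hlt z
  rcases (hδ.trans hz).eq_or_lt.imp Eq.symm id with h0 | hpos
  · have hδ0 : δ = 0 := le_antisymm (hz.trans h0.le) hδ
    by_cases hν : ν = 0
    · exfalso
      rw [hδ0, hν] at hα4
      rw [show ((0:ℝ) ^ (2 * ((1:ℝ) - 0))) = 0 from Real.zero_rpow (by norm_num)] at hα4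
      rw [zero_div] at hα4
      linarith
    · have hν' : (2 * ν) ≠ 0 :=
        mul_ne_zero two_ne_zero hν
      rw [h0] at h1 ⊢
      rw [Real.zero_rpow hν'] at h1
      norm_num at h1 ⊢
      simpa using h1
  · have hmono2 : δ ^ (2 * (1 - ν)) ≤ ‖z - zx‖ ^ (2 * (1 - ν)) :=
      Real.rpow_le_rpow hδ hz (by linarith)
    have hden : (0:ℝ) < 4 * μ * L ^ 2 := by positivity
    have hα5 : α ≤ ‖z - zx‖ ^ (2 * (1 - ν)) / (4 * μ * L ^ 2) := by
      refine le_trans hα4 ?_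
      rw [div_eq_mul_inv, div_eq_mul_inv]
      exact mul_le_mul_of_nonneg_right hmono2 (inv_nonneg.2 hden.le)
    have hq0 : α * (4 * μ * L ^ 2) ≤ ‖z - zx‖ ^ (2 * (1 - ν)) := (le_div_iff₀ hden).mp hα5
    have htν : (0:ℝ) ≤ ‖z - zx‖ ^ (2 * ν) := Real.rpow_nonneg (norm_nonneg _) _
    have hq1 := mul_le_mul_of_nonneg_right hq0 htν
    have hsum : ‖z - zx‖ ^ (2 * (1 - ν)) * ‖z - zx‖ ^ (2 * ν) = ‖z - zx‖ ^ (2 : ℕ) := by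
      rw [← Real.rpow_natCast (‖z - zx‖) 2, ← Real.rpow_add hpos]
      congr 1
      push_cast
      ring
    rw [hsum] at hq1
    have hS : α ^ 2 * L ^ 2 * ‖z - zx‖ ^ (2 * ν) ≤ α / (4 * μ) * ‖z - zx‖ ^ 2 := by
      have h7 := mul_le_mul_of_nonneg_left hq1 (show (0:ℝ) ≤ α / (4 * μ) by positivity)
      have h8 : α / (4 * μ) * (α * (4 * μ * L ^ 2) * ‖z - zx‖ ^ (2 * ν))
          = α ^ 2 * L ^ 2 * ‖z - zx‖ ^ (2 * ν) := by
        field_simp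
      rw [h8] at h7
      exact h7
    have hd1 : 0 ≤ 1 - α / μ := by
      rw [sub_nonneg]; exact (div_le_one hμ).mpr hlt.le
    have hd3 : 0 < α / μ := div_pos hαpos hμ
    have he1 : (1 - α / μ) ^ 2 ≤ 1 - α / μ := by nlinarith [hd3]
    have he2 : (1 - α / μ) ^ 2 * ‖z - zx‖ ^ 2 ≤ (1 - α / μ) * ‖z - zx‖ ^ 2 :=
      mul_le_mul_of_nonneg_right he1 (sq_nonneg _)
    have hrT : 0 ≤ α / μ * ‖z - zx‖ ^ 2 := mul_nonneg hd3.le (sq_nonneg _)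
    have hb1 : α / (4 * μ) * ‖z - zx‖ ^ 2 = α / μ * ‖z - zx‖ ^ 2 / 4 := by ring
    have hb2 : (1 - α / (2 * μ)) * ‖z - zx‖ ^ 2 = ‖z - zx‖ ^ 2 - α / μ * ‖z - zx‖ ^ 2 / 2 := by
      ring
    linarith [h1, hS, he2, hrT, hb1, hb2]
end
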